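/- Fix α ∈ (0,1), T > 0 and λ ≥ 0. There exist constants C > 0 and Δt₀ > 0, depending only on α, T, λ, such that: for every integer N ≥ 1 with Δt = T/N ≤ Δt₀, every g ≥ 0, and every sequence of nonnegative reals w₀, w₁, …, w_N satisfying δᵅwₙ ≤ λwₙ + g for all n ∈ {1,…,N}, one has wₙ ≤ C(w₀ + g) for all n ∈ {0,…,N}. -/

import Mathlib

/-!
The weights `bⱼ = j^β - (j-1)^β`, `β = 1 - α`, are the increments of a concave function, so they
are positive and decreasing with `b₁ = 1`. After summation by parts, `δᵅwₙ` is
`κ = Δt^(-α) / Γ(2-α)` times `wₙ` minus a nonnegative combination of `w₀, …, wₙ₋₁`; hence once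
`κ > λ`, the operator `δᵅ - λ` satisfies a comparison principle, and `w` is dominated by any
supersolution with source `g` that dominates `w₀`.

The supersolution is `(w₀ + g) φ`, where `φ = 2 e^{μt}` except `φ(0) = 1`. Far from `t = 0`,
the increments of `e^{μt}` over the last window of length about `1/μ` add up to at least half
of `e^{μtₙ}`, and each carries a weight `κ bⱼ ≳ (jΔt)^(-α) ≳ μ^α`; near `t = 0` the drop of `φ`
at the origin contributes `κ bₙ ≳ tₙ^(-α) ≳ μ^α`. Choosing `μ^α` large against `λ` makes
`δᵅφ ≥ λφ + 1`, and then `wₙ ≤ 2 e^{μT} (w₀ + g)`.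
-/

/-- The L1 weights `b_j(β) = j^β - (j-1)^β`. -/
noncomputable def bcoef (β : ℝ) (j : ℕ) : ℝ := (j : ℝ) ^ β - ((j : ℝ) - 1) ^ β

/-- The scalar L1 discretization of the Caputo derivative of order `α` with time step `Δt`. -/
noncomputable def L1delta (α Δt : ℝ) (w : ℕ → ℝ) (n : ℕ) : ℝ :=
  (Δt ^ (-α) / Real.Gamma (2 - α)) *
    ∑ i ∈ Finset.range n, bcoef (1 - α) (n - i) * (w (i + 1) - w i)

open Finset Real

noncomputable def L1scale (α Δt : ℝ) : ℝ := Δt ^ (-α) / Gamma (2 - α)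

theorem L1scale_nonneg {α Δt : ℝ} (hα : α < 1) (hΔt : 0 ≤ Δt) : 0 ≤ L1scale α Δt :=
  div_nonneg (rpow_nonneg hΔt _) (Gamma_pos_of_pos (by linarith)).le

section Weights

variable {β : ℝ}

theorem bcoef_one (hβ : β ≠ 0) : bcoef β 1 = 1 := by
  simp [bcoef, zero_rpow hβ]

theorem bcoef_nonneg (hβ : 0 ≤ β) {j : ℕ} (hj : 1 ≤ j) : 0 ≤ bcoef β j := by
  have hj' : (1 : ℝ) ≤ j := by exact_mod_cast hj
  exact sub_nonneg.mpr (rpow_le_rpow (by linarith) (by linarith) hβ)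

theorem bcoef_antitoneOn (hβ₀ : 0 ≤ β) (hβ₁ : β ≤ 1) : AntitoneOn (bcoef β) (Set.Ici 1) := by
  refine antitoneOn_nat_Ici_of_succ_le fun j (hj : 1 ≤ j) => ?_
  have hj' : (1 : ℝ) ≤ j := by exact_mod_cast hj
  have h := (concaveOn_rpow hβ₀ hβ₁).slope_anti_adjacent (x := (j : ℝ) - 1) (y := j)
    (z := j + 1) (by simp; linarith) (by simp; linarith) (by linarith) (by linarith)
  simpa [bcoef] using h

theorem mul_rpow_sub_one_le_bcoef (hβ₀ : 0 ≤ β) (hβ₁ : β ≤ 1) {j : ℕ} (hj : 1 ≤ j) :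
    β * (j : ℝ) ^ (β - 1) ≤ bcoef β j := by
  have hj' : (1 : ℝ) ≤ j := by exact_mod_cast hj
  have h := (concaveOn_rpow hβ₀ hβ₁).le_slope_of_hasDerivAt (x := (j : ℝ) - 1) (y := j)
    (by simp; linarith) (by simp) (by linarith)
    (hasDerivAt_rpow_const (Or.inl (by positivity)))
  simpa [slope_def_field, bcoef] using h

end Weights

section Sums

variable {b : ℕ → ℝ}

theorem sum_mul_sub_le_of_antitoneOn (hb : AntitoneOn b (Set.Ici 1)) (hb₀ : ∀ j, 1 ≤ j → 0 ≤ b j)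
    {d : ℕ → ℝ} {n : ℕ} (hd : ∀ i ≤ n, 0 ≤ d i) :
    ∑ i ∈ range (n + 1), b (n + 1 - i) * (d (i + 1) - d i) ≤ b 1 * d (n + 1) := by
  induction n generalizing b with
  | zero =>
    simp only [zero_add, range_one, sum_singleton, tsub_zero]
    nlinarith [hb₀ 1 le_rfl, hd 0 le_rfl]
  | succ n ih =>
    have hshift : ∑ i ∈ range (n + 1), b (n + 2 - i) * (d (i + 1) - d i)
        = ∑ i ∈ range (n + 1), b (n + 1 - i + 1) * (d (i + 1) - d i) :=
      sum_congr rfl fun i hi => by rw [mem_range] at hi; congr 2; omega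
    have hrest := ih (b := fun j => b (j + 1))
      (fun x hx y hy hxy => hb (by simp at hx ⊢) (by simp at hy ⊢) (by omega))
      (fun j _ => hb₀ _ (by omega)) (fun i hi => hd i (by omega))
    have h21 : b 2 ≤ b 1 := hb (by simp) (by simp) (by norm_num)
    rw [sum_range_succ, hshift, Nat.add_sub_cancel_left]
    nlinarith [hd (n + 1) le_rfl]

theorem mul_sub_le_sum_mul_sub (hb : AntitoneOn b (Set.Ici 1)) (hb₀ : ∀ j, 1 ≤ j → 0 ≤ b j)
    {e : ℕ → ℝ} (he : Monotone e) (m j : ℕ) :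
    b j * (e (m + j) - e m) ≤ ∑ i ∈ range (m + j), b (m + j - i) * (e (i + 1) - e i) := by
  have hterm : ∀ i, 0 ≤ e (i + 1) - e i := fun i => sub_nonneg.mpr (he (Nat.le_succ i))
  have htel := sum_range_sub (fun k => e (m + k)) j
  simp only [add_zero] at htel
  rw [sum_range_add, ← htel, mul_sum]
  refine le_add_of_nonneg_of_le (sum_nonneg fun i hi => ?_) (sum_le_sum fun k hk => ?_)
  · exact mul_nonneg (hb₀ _ (by simp at hi; omega)) (hterm i)
  · rw [mem_range] at hk
    exact mul_le_mul_of_nonneg_right (hb (by simp; omega) (by simp; omega) (by omega)) (hterm _)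

end Sums

section L1

variable {α Δt : ℝ}

theorem L1delta_sub (v w : ℕ → ℝ) (n : ℕ) :
    L1delta α Δt (fun i => v i - w i) n = L1delta α Δt v n - L1delta α Δt w n := by
  simp only [L1delta, ← mul_sub, ← sum_sub_distrib]
  congr 1
  exact sum_congr rfl fun i _ => by ring

theorem L1delta_const_mul (c : ℝ) (w : ℕ → ℝ) (n : ℕ) :
    L1delta α Δt (fun i => c * w i) n = c * L1delta α Δt w n := by
  simp only [L1delta, mul_sum]
  exact sum_congr rfl fun i _ => by ring

theorem L1delta_le_of_nonneg (hα : α ∈ Set.Ioo 0 1) (hΔt : 0 ≤ Δt) {d : ℕ → ℝ} {n : ℕ}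
    (hd : ∀ i ≤ n, 0 ≤ d i) :
    L1delta α Δt d (n + 1) ≤ L1scale α Δt * d (n + 1) := by
  obtain ⟨hα₀, hα₁⟩ := hα
  have h := sum_mul_sub_le_of_antitoneOn (b := bcoef (1 - α)) (bcoef_antitoneOn (by linarith)
    (by linarith)) (fun j hj => bcoef_nonneg (by linarith) hj) hd
  rw [bcoef_one (by linarith), one_mul] at h
  exact mul_le_mul_of_nonneg_left h (L1scale_nonneg hα₁ hΔt)

theorem L1delta_comparison (hα : α ∈ Set.Ioo 0 1) (hΔt : 0 ≤ Δt) {lam : ℝ}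
    (hlam : lam < L1scale α Δt) {N : ℕ} {v w : ℕ → ℝ} (h₀ : w 0 ≤ v 0)
    (h : ∀ n ∈ Icc 1 N, L1delta α Δt w n - lam * w n ≤ L1delta α Δt v n - lam * v n) :
    ∀ n ≤ N, w n ≤ v n := by
  intro n
  induction n using Nat.strong_induction_on with
  | _ n ih =>
    intro hn
    rcases n with _ | m
    · exact h₀
    have hle := L1delta_le_of_nonneg hα hΔt (d := fun i => v i - w i) (n := m)
      fun i hi => sub_nonneg.mpr (ih i (by omega) (by omega))
    rw [L1delta_sub] at hle
    have := h (m + 1) (mem_Icc.mpr ⟨by omega, hn⟩)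
    nlinarith

end L1

section Barrier

variable {α Δt μ : ℝ}

theorem le_L1scale_mul_bcoef (hα : α ∈ Set.Ioo 0 1) (hΔt : 0 < Δt) (hμ : 0 < μ) {K : ℝ}
    (hK : Gamma (2 - α) * K ≤ (1 - α) * (μ / 2) ^ α) {j : ℕ} (hj : 1 ≤ j)
    (hjΔt : j * Δt ≤ 2 / μ) :
    K ≤ L1scale α Δt * bcoef (1 - α) j := by
  obtain ⟨hα₀, hα₁⟩ := hα
  have hΓ : 0 < Gamma (2 - α) := Gamma_pos_of_pos (by linarith)
  have hj₀ : (0 : ℝ) < j := by exact_mod_cast hj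
  have hμα : (μ / 2) ^ α = (2 / μ) ^ (-α) := by
    rw [rpow_neg (by positivity), ← inv_rpow (by positivity), inv_div]
  have hwindow : (2 / μ) ^ (-α) ≤ (j * Δt) ^ (-α) :=
    rpow_le_rpow_of_nonpos (by positivity) hjΔt (by linarith)
  have hweight := mul_rpow_sub_one_le_bcoef (β := 1 - α) (by linarith) (by linarith) hj
  rw [sub_sub_cancel_left] at hweight
  calc K ≤ (1 - α) / Gamma (2 - α) * (μ / 2) ^ α := by
        rw [div_mul_eq_mul_div, le_div_iff₀ hΓ]; linarith
    _ ≤ (1 - α) / Gamma (2 - α) * (j * Δt) ^ (-α) := by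
        rw [hμα]; gcongr
    _ = L1scale α Δt * ((1 - α) * (j : ℝ) ^ (-α)) := by
        rw [L1scale, mul_rpow hj₀.le hΔt.le]; ring
    _ ≤ L1scale α Δt * bcoef (1 - α) j := by gcongr; exact L1scale_nonneg hα₁ hΔt.le

theorem exists_window (hμ : 0 < μ) (hΔt : 0 < Δt) (hμΔt : μ * Δt ≤ 1) {n : ℕ} (hn : n ≠ 0) :
    ∃ m j : ℕ, n = m + j ∧ 1 ≤ j ∧ j * Δt ≤ 2 / μ ∧ (m = 0 ∨ 1 ≤ μ * (j * Δt)) := by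
  set J := ⌈1 / (μ * Δt)⌉₊
  have hJ₁ : 1 ≤ J := Nat.one_le_iff_ne_zero.mpr (Nat.ceil_pos.mpr (by positivity)).ne'
  have hJ : J * Δt ≤ 2 / μ := by
    have := Nat.ceil_lt_add_one (a := 1 / (μ * Δt)) (by positivity)
    rw [le_div_iff₀ hμ]
    have h1 : (J : ℝ) * (μ * Δt) < 1 + μ * Δt := by
      calc (J : ℝ) * (μ * Δt) < (1 / (μ * Δt) + 1) * (μ * Δt) := by gcongr
        _ = 1 + μ * Δt := by field_simp
    nlinarith
  rcases le_or_gt n J with hnJ | hJn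
  · refine ⟨0, n, by simp, by omega, le_trans ?_ hJ, Or.inl rfl⟩
    gcongr
  · refine ⟨n - J, J, by omega, hJ₁, hJ, Or.inr ?_⟩
    have := Nat.le_ceil (1 / (μ * Δt))
    rw [div_le_iff₀ (by positivity)] at this
    linarith

noncomputable def l1Barrier (μ Δt : ℝ) (i : ℕ) : ℝ :=
  2 * exp (μ * (i * Δt)) - if i = 0 then 1 else 0

theorem L1delta_l1Barrier {n : ℕ} (hn : n ≠ 0) :
    L1delta α Δt (l1Barrier μ Δt) n
      = 2 * L1delta α Δt (fun i => exp (μ * (i * Δt))) n + L1scale α Δt * bcoef (1 - α) n := by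
  obtain ⟨k, rfl⟩ := Nat.exists_eq_succ_of_ne_zero hn
  have hjump : L1delta α Δt (fun i => if i = 0 then 1 else 0) (k + 1)
      = -(L1scale α Δt * bcoef (1 - α) (k + 1)) := by
    simp [L1delta, L1scale]
  rw [show l1Barrier μ Δt = fun i : ℕ => 2 * exp (μ * (i * Δt)) - if i = 0 then 1 else 0 from rfl,
    L1delta_sub, L1delta_const_mul, hjump, sub_neg_eq_add]

theorem le_L1delta_l1Barrier (hα : α ∈ Set.Ioo 0 1) (hΔt : 0 < Δt) (hμ : 0 < μ)
    (hμΔt : μ * Δt ≤ 1) {lam : ℝ} (hK : Gamma (2 - α) * (2 * lam + 1) ≤ (1 - α) * (μ / 2) ^ α)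
    {n : ℕ} (hn : n ≠ 0) :
    lam * l1Barrier μ Δt n + 1 ≤ L1delta α Δt (l1Barrier μ Δt) n := by
  set κ := L1scale α Δt
  have hκ : 0 ≤ κ := L1scale_nonneg hα.2 hΔt.le
  set E : ℕ → ℝ := fun i => exp (μ * (i * Δt))
  have hE : Monotone E := fun a b hab => exp_le_exp.mpr (by gcongr)
  have hE₁ : ∀ i, 1 ≤ E i := fun i => one_le_exp (by positivity)
  obtain ⟨m, j, rfl, hj, hjΔt, hm⟩ := exists_window hμ hΔt hμΔt hn
  have hbj : 2 * lam + 1 ≤ κ * bcoef (1 - α) j := le_L1scale_mul_bcoef hα hΔt hμ hK hj hjΔt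
  have hb₀ : ∀ i, 1 ≤ i → 0 ≤ bcoef (1 - α) i := fun i hi => bcoef_nonneg (by linarith [hα.2]) hi
  have htel : κ * (bcoef (1 - α) j * (E (m + j) - E m)) ≤ L1delta α Δt E (m + j) :=
    mul_le_mul_of_nonneg_left (mul_sub_le_sum_mul_sub (bcoef_antitoneOn (by linarith [hα.2])
      (by linarith [hα.1])) hb₀ hE m j) hκ
  have hwin : κ * bcoef (1 - α) j * E (m + j)
      ≤ 2 * (κ * (bcoef (1 - α) j * (E (m + j) - E m))) + κ * bcoef (1 - α) (m + j) := by
    have hκb := mul_nonneg hκ (hb₀ j hj)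
    -- either the window starts at `t = 0`, where `l1Barrier` drops, or `E` doubles across it
    rcases hm with rfl | hm
    · have : E 0 = 1 := by simp [E]
      simp only [zero_add, this]
      nlinarith [hE₁ j]
    · have hdouble : 2 * E m ≤ E (m + j) := by
        have h2 : 2 ≤ exp (μ * (j * Δt)) := by linarith [add_one_le_exp (μ * (j * Δt))]
        calc 2 * E m ≤ exp (μ * (j * Δt)) * E m := by gcongr
          _ = E (m + j) := by simp only [E, ← exp_add]; push_cast; ring_nf
      nlinarith [mul_nonneg hκ (hb₀ (m + j) (by omega))]
  have hbarrier : l1Barrier μ Δt (m + j) = 2 * E (m + j) := by simp [l1Barrier, E]; omega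
  rw [L1delta_l1Barrier hn, hbarrier]
  calc lam * (2 * E (m + j)) + 1 ≤ (2 * lam + 1) * E (m + j) := by nlinarith [hE₁ (m + j)]
    _ ≤ κ * bcoef (1 - α) j * E (m + j) := by gcongr
    _ ≤ _ := by linarith

theorem exists_rate (hα : α ∈ Set.Ioo 0 1) (K : ℝ) :
    ∃ μ, 0 < μ ∧ Gamma (2 - α) * K ≤ (1 - α) * (μ / 2) ^ α := by
  have hgrow := (tendsto_rpow_atTop hα.1).comp (Filter.tendsto_id.atTop_div_const two_pos)
  obtain ⟨μ, hμ, hμK⟩ := ((Filter.eventually_gt_atTop 0).and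
    (hgrow.eventually_ge_atTop (Gamma (2 - α) * K / (1 - α)))).exists
  exact ⟨μ, hμ, by rwa [div_le_iff₀' (by linarith [hα.2])] at hμK⟩

theorem le_mul_l1Barrier (hα : α ∈ Set.Ioo 0 1) (hΔt : 0 < Δt) (hμ : 0 < μ)
    (hμΔt : μ * Δt ≤ 1) {lam : ℝ} (hlam : 0 ≤ lam)
    (hK : Gamma (2 - α) * (2 * lam + 1) ≤ (1 - α) * (μ / 2) ^ α) {N : ℕ} {g : ℝ} {w : ℕ → ℝ}
    (hg : 0 ≤ g) (hw₀ : 0 ≤ w 0) (hw : ∀ n ∈ Icc 1 N, L1delta α Δt w n ≤ lam * w n + g) :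
    ∀ n ≤ N, w n ≤ (w 0 + g) * l1Barrier μ Δt n := by
  have hκ : lam < L1scale α Δt := by
    have h := le_L1scale_mul_bcoef hα hΔt hμ hK le_rfl
      (by rw [Nat.cast_one, one_mul, le_div_iff₀ hμ]; linarith)
    rw [bcoef_one (by linarith [hα.2]), mul_one] at h
    linarith
  refine L1delta_comparison hα hΔt.le hκ (by simp [l1Barrier]; linarith) fun n hn => ?_
  have hbarrier := le_L1delta_l1Barrier hα hΔt hμ hμΔt hK (n := n)
    (by rw [mem_Icc] at hn; omega)
  rw [L1delta_const_mul]
  nlinarith [hw n hn, mul_le_mul_of_nonneg_left hbarrier (add_nonneg hw₀ hg)]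

theorem l1Barrier_le (hμ : 0 ≤ μ) {n : ℕ} {T : ℝ} (hnT : n * Δt ≤ T) :
    l1Barrier μ Δt n ≤ 2 * exp (μ * T) := by
  calc l1Barrier μ Δt n ≤ 2 * exp (μ * (n * Δt)) := by
        unfold l1Barrier; split_ifs <;> norm_num
    _ ≤ 2 * exp (μ * T) := by gcongr

end Barrier

/-- Discrete fractional Grönwall inequality with a constant source:
`δᵅwₙ ≤ λwₙ + g` implies `wₙ ≤ C(w₀ + g)`. -/
theorem stmt_10 (α T lam : ℝ) (hα : α ∈ Set.Ioo (0 : ℝ) 1) (hT : 0 < T) (hlam : 0 ≤ lam) :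
    ∃ C Δt₀ : ℝ, 0 < C ∧ 0 < Δt₀ ∧
      ∀ (N : ℕ), 1 ≤ N → T / (N : ℝ) ≤ Δt₀ →
      ∀ (g : ℝ), 0 ≤ g →
      ∀ (w : ℕ → ℝ), (∀ n, n ≤ N → 0 ≤ w n) →
        (∀ n, n ∈ Finset.Icc 1 N → L1delta α (T / (N : ℝ)) w n ≤ lam * w n + g) →
        ∀ n, n ≤ N → w n ≤ C * (w 0 + g) := by
  obtain ⟨μ, hμ, hμK⟩ := exists_rate hα (2 * lam + 1)
  refine ⟨2 * exp (μ * T), 1 / μ, by positivity, by positivity, ?_⟩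
  intro N hN hΔt g hg w hw hrec n hn
  have hN₀ : (0 : ℝ) < N := by exact_mod_cast hN
  have hμΔt : μ * (T / N) ≤ 1 := by rwa [le_div_iff₀ hμ, mul_comm] at hΔt
  have hnT : n * (T / N) ≤ T := by
    rw [mul_div_assoc', div_le_iff₀ hN₀, mul_comm]; gcongr
  have hw₀ := hw 0 (Nat.zero_le N)
  calc w n ≤ (w 0 + g) * l1Barrier μ (T / N) n :=
        le_mul_l1Barrier hα (by positivity) hμ hμΔt hlam hμK hg hw₀ hrec n hn
    _ ≤ (w 0 + g) * (2 * exp (μ * T)) := by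
        gcongr
        exact l1Barrier_le hμ.le hnT
    _ = 2 * exp (μ * T) * (w 0 + g) := mul_comm _ _
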